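/- Every simplicial complex K is d(K)-collapsible, where d(K) = max over faces σ of K of |M(σ)|, and M(σ) is the set of vertices appearing in the minimal exclusion sequence of σ. -/

import Mathlib

variable {V : Type*} [Fintype V] [LinearOrder V]

open Finset

/-- `W` dominates the set `A` in `G`: every vertex of `A` is in `W` or adjacent to a vertex of `W`. -/
def Dominates (G : SimpleGraph V) (W A : Finset V) : Prop :=
  ∀ a ∈ A, a ∈ W ∨ ∃ w ∈ W, G.Adj w a

/-- `I` is an independent set of `G`. -/
def IndepSet (G : SimpleGraph V) (I : Finset V) : Prop :=
  ∀ u ∈ I, ∀ v ∈ I, ¬ G.Adj u v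

instance (G : SimpleGraph V) [DecidableRel G.Adj] (I : Finset V) :
    Decidable (IndepSet G I) := by unfold IndepSet; infer_instance

/-- The domination number of `G`. -/
noncomputable def gamma (G : SimpleGraph V) : ℕ :=
  sInf {k | ∃ W : Finset V, W.card = k ∧ Dominates G W Finset.univ}

/-- The independence domination number of `G`. -/
noncomputable def igamma (G : SimpleGraph V) : ℕ :=
  sInf {k | ∀ I : Finset V, IndepSet G I → ∃ W : Finset V, W.card ≤ k ∧ Dominates G W I}

/-- The noncover complex of `G`: faces are the vertex sets whose complement is not independent. -/
def NC (G : SimpleGraph V) [DecidableRel G.Adj] : Finset (Finset V) :=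
  Finset.univ.filter fun W => ¬ IndepSet G Wᶜ

/-- The independence complex of `G`. -/
def IndComplex (G : SimpleGraph V) [DecidableRel G.Adj] : Finset (Finset V) :=
  Finset.univ.filter fun I => IndepSet G I

/-- The combinatorial Alexander dual of a complex on the full vertex set `V`. -/
def AlexDual (K : Finset (Finset V)) : Finset (Finset V) :=
  Finset.univ.filter fun s => sᶜ ∉ K

/-- `K` is a simplicial complex (downward closed family of finite sets). -/
def IsComplex (K : Finset (Finset V)) : Prop :=
  ∀ σ ∈ K, ∀ τ ⊆ σ, τ ∈ K

/-- `s` is a maximal face (facet) of `K`. -/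
def IsMaxFace (K : Finset (Finset V)) (s : Finset V) : Prop :=
  s ∈ K ∧ ∀ t ∈ K, s ⊆ t → t = s

/-- `σ` is a free face of `K`: a face contained in a unique maximal face. -/
def IsFreeFace (K : Finset (Finset V)) (σ : Finset V) : Prop :=
  σ ∈ K ∧ ∃ τ ∈ K, σ ⊆ τ ∧ ∀ ρ ∈ K, σ ⊆ ρ → ρ ⊆ τ

/-- `K'` is obtained from `K` by an elementary `d`-collapse. -/
def ElemCollapse (d : ℕ) (K K' : Finset (Finset V)) : Prop :=
  ∃ σ : Finset V, IsFreeFace K σ ∧ σ.card ≤ d ∧ K' = K.filter fun ρ => ¬ σ ⊆ ρ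

/-- `K` is `d`-collapsible. -/
def Collapsible (d : ℕ) (K : Finset (Finset V)) : Prop :=
  Relation.ReflTransGen (ElemCollapse d) K ∅

/-- chordality -/
def IsChordal (G : SimpleGraph V) : Prop :=
  ∀ (u : V) (c : G.Walk u u), c.IsCycle → 4 ≤ c.length →
    ∃ x ∈ c.support, ∃ y ∈ c.support, G.Adj x y ∧ s(x, y) ∉ c.edges

/-- simplicial vertex -/
def IsSimplicialVtx (G : SimpleGraph V) (v : V) : Prop :=
  ∀ x y : V, G.Adj v x → G.Adj v y → x ≠ y → G.Adj x y

/-- Auxiliary recursion computing the first `j` entries of the minimal exclusion sequence of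
the face `σ` with respect to the ordered list `facets 0, facets 1, …` of maximal faces. -/
def mesAux (σ : Finset V) (facets : ℕ → Finset V) : ℕ → List V
  | 0 => []
  | j + 1 =>
    let prev := mesAux σ facets j
    let A := σ \ facets j
    let B := A.filter fun v => v ∈ prev
    prev ++
      (if hB : B.Nonempty then [B.min' hB]
       else if hA : A.Nonempty then [A.min' hA] else [])

open Classical in
/-- `i(σ)` (in 0-based indexing): the least `j` such that `σ ⊆ facets j`. -/
noncomputable def mesIdx (facets : ℕ → Finset V) (σ : Finset V) : ℕ :=
  if h : ∃ j, σ ⊆ facets j then Nat.find h else 0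

/-- The minimal exclusion sequence `mes(σ)` of a face `σ`. -/
noncomputable def mes (facets : ℕ → Finset V) (σ : Finset V) : List V :=
  mesAux σ facets (mesIdx facets σ)

/-- `M(σ)`: the set of vertices appearing in `mes(σ)`. -/
noncomputable def mesSet (facets : ℕ → Finset V) (σ : Finset V) : Finset V :=
  (mes facets σ).toFinset

/-- The ordered facets `σ₁, σ₂, …` of the noncover complex `NC G`: complements of the edges of
`G`, where the edges are listed in decreasing lexicographic order (induced by the vertex order). -/
noncomputable def ncFacets (G : SimpleGraph V) [DecidableRel G.Adj] : ℕ → Finset V :=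
  fun j =>
    let L : List (Lex (V × V)) :=
      ((Finset.univ.filter fun p : Lex (V × V) =>
        G.Adj (ofLex p).1 (ofLex p).2 ∧ (ofLex p).1 < (ofLex p).2).sort (· ≤ ·)).reverse
    match L[j]? with
    | some p => ({(ofLex p).1, (ofLex p).2} : Finset V)ᶜ
    | none => ∅

/-!
Group the faces of `K` by their minimal exclusion sequence. A face containing `M(σ)` has index at
least `i(σ)`, and when the indices agree its sequence is lexicographically at most `mes(σ)`; faces
with equal sequences are closed under union. So if `σ` has the longest sequence and, among those,
the lexicographically least one, then the faces containing `M(σ)` are exactly those with sequence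
`mes(σ)`, their union is the unique maximal one, and collapsing the free face `M(σ)`, of size at most
`d(K)`, removes exactly this class. Repeat until nothing is left.
-/

section MinimalExclusionSequence

variable {α : Type*} [LinearOrder α] (f : ℕ → Finset α) {σ ρ : Finset α} {j : ℕ}

/-- Given the prefix `p` computed so far, step `j` appends the least element of this set. -/
def mesCandidates (σ : Finset α) (p : List α) (j : ℕ) : Finset α :=
  if (p.toFinset \ f j).Nonempty then p.toFinset \ f j else σ \ f j

lemma notMem_of_mem_mesCandidates {p : List α} {a : α} (ha : a ∈ mesCandidates f σ p j) :
    a ∉ f j := by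
  unfold mesCandidates at ha
  split_ifs at ha <;> exact (mem_sdiff.1 ha).2

lemma mesCandidates_nonempty (h : ¬ σ ⊆ f j) (p : List α) :
    (mesCandidates f σ p j).Nonempty := by
  unfold mesCandidates
  split_ifs with hp
  exacts [hp, sdiff_nonempty.2 h]

lemma mesCandidates_mono (h : ρ ⊆ σ) (p : List α) :
    mesCandidates f ρ p j ⊆ mesCandidates f σ p j := by
  unfold mesCandidates
  split_ifs
  exacts [Subset.rfl, sdiff_subset_sdiff h Subset.rfl]

lemma mesCandidates_union (σ₁ σ₂ : Finset α) (p : List α) :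
    mesCandidates f (σ₁ ∪ σ₂) p j = mesCandidates f σ₁ p j ∪ mesCandidates f σ₂ p j := by
  unfold mesCandidates
  split_ifs
  exacts [(union_self _).symm, union_sdiff_distrib σ₁ σ₂ (f j)]

lemma mem_mesCandidates_of_mem {p : List α} {a : α} (ha : a ∈ mesCandidates f σ p j)
    (haρ : a ∈ ρ) : a ∈ mesCandidates f ρ p j := by
  unfold mesCandidates at ha ⊢
  split_ifs at ha ⊢
  exacts [ha, mem_sdiff.2 ⟨haρ, (mem_sdiff.1 ha).2⟩]

lemma mem_of_mem_mesAux {v : α} (hv : v ∈ mesAux σ f j) : v ∈ σ := by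
  induction j with
  | zero => simp [mesAux] at hv
  | succ j ih =>
    simp only [mesAux, List.mem_append] at hv
    split_ifs at hv with hB hA
    · rcases hv with hv | hv
      · exact ih hv
      · rw [List.mem_singleton.1 hv]
        exact (mem_sdiff.1 (mem_filter.1 (min'_mem _ hB)).1).1
    · rcases hv with hv | hv
      · exact ih hv
      · rw [List.mem_singleton.1 hv]
        exact (mem_sdiff.1 (min'_mem _ hA)).1
    · simpa using hv.elim ih

lemma mesAux_succ (h : ¬ σ ⊆ f j) :
    mesAux σ f (j + 1) = mesAux σ f j ++
      [(mesCandidates f σ (mesAux σ f j) j).min' (mesCandidates_nonempty f h _)] := by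
  have hB : (σ \ f j).filter (· ∈ mesAux σ f j) = (mesAux σ f j).toFinset \ f j := by
    ext v
    simp only [mem_filter, mem_sdiff, List.mem_toFinset]
    exact ⟨fun ⟨⟨_, hvf⟩, hv⟩ => ⟨hv, hvf⟩, fun ⟨hv, hvf⟩ => ⟨⟨mem_of_mem_mesAux f hv, hvf⟩, hv⟩⟩
  simp only [mesAux, hB, mesCandidates]
  split_ifs <;> simp_all

lemma mesAux_prefix {k : ℕ} (h : j ≤ k) : mesAux σ f j <+: mesAux σ f k := by
  induction k, h using Nat.le_induction with
  | base => exact List.prefix_refl _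
  | succ k _ ih => exact ih.trans ⟨_, rfl⟩

lemma not_subset_of_lt_mesIdx (h : j < mesIdx f σ) : ¬ σ ⊆ f j := by
  classical
  unfold mesIdx at h
  split_ifs at h with hex
  exacts [Nat.find_min hex h, absurd h (Nat.not_lt_zero j)]

lemma subset_mesIdx (h : ∃ j, σ ⊆ f j) : σ ⊆ f (mesIdx f σ) := by
  classical
  unfold mesIdx
  rw [dif_pos h]
  exact Nat.find_spec h

lemma mesIdx_le (h : σ ⊆ f j) : mesIdx f σ ≤ j := by
  classical
  unfold mesIdx
  rw [dif_pos ⟨j, h⟩]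
  exact Nat.find_min' _ h

lemma mesIdx_mono (hσ : ∃ j, σ ⊆ f j) (h : ρ ⊆ σ) : mesIdx f ρ ≤ mesIdx f σ :=
  mesIdx_le f (h.trans (subset_mesIdx f hσ))

lemma length_mesAux (h : j ≤ mesIdx f σ) : (mesAux σ f j).length = j := by
  induction j with
  | zero => rfl
  | succ j ih =>
    rw [mesAux_succ f (not_subset_of_lt_mesIdx f h), List.length_append, ih (by omega),
      List.length_singleton]

lemma length_mes (σ : Finset α) : (mes f σ).length = mesIdx f σ :=
  length_mesAux f le_rfl

lemma mesAux_eq_take (h : j ≤ mesIdx f σ) : mesAux σ f j = (mes f σ).take j := by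
  rw [List.prefix_iff_eq_take.1 (mesAux_prefix f h), length_mesAux f h, mes]

lemma mesSet_subset (σ : Finset α) : mesSet f σ ⊆ σ :=
  fun _ hv => mem_of_mem_mesAux f (List.mem_toFinset.1 hv)

lemma min'_mesCandidates_mem_mesSet (h : j < mesIdx f σ) :
    (mesCandidates f σ (mesAux σ f j) j).min' (mesCandidates_nonempty f
      (not_subset_of_lt_mesIdx f h) _) ∈ mesSet f σ := by
  refine List.mem_toFinset.2 ((mesAux_prefix f h).subset ?_)
  rw [mesAux_succ f (not_subset_of_lt_mesIdx f h)]
  exact List.mem_append_right _ (List.mem_singleton_self _)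

lemma mesIdx_le_mesIdx_of_mesSet_subset (hρ : ∃ j, ρ ⊆ f j) (h : mesSet f σ ⊆ ρ) :
    mesIdx f σ ≤ mesIdx f ρ := by
  by_contra! hlt
  exact notMem_of_mem_mesCandidates f (min'_mem _ _)
    (subset_mesIdx f hρ (h (min'_mesCandidates_mem_mesSet f hlt)))

lemma mes_le_mes_of_mesCandidates (hidx : mesIdx f ρ = mesIdx f σ)
    (hstep : ∀ j < mesIdx f σ, mesAux ρ f j = mesAux σ f j →
      ∀ b ∈ mesCandidates f σ (mesAux σ f j) j, ∃ a ∈ mesCandidates f ρ (mesAux σ f j) j, a ≤ b) :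
    mes f ρ ≤ mes f σ := by
  suffices key : ∀ j ≤ mesIdx f σ,
      mesAux ρ f j = mesAux σ f j ∨ ∀ x y, mesAux ρ f j ++ x < mesAux σ f j ++ y by
    rw [mes, mes, hidx]
    rcases key _ le_rfl with heq | hlt
    · exact heq.le
    · simpa using (hlt [] []).le
  intro j hj
  induction j with
  | zero => exact Or.inl rfl
  | succ j ih =>
    have hjσ : j < mesIdx f σ := hj
    rw [mesAux_succ f (not_subset_of_lt_mesIdx f (hidx ▸ hjσ)),
      mesAux_succ f (not_subset_of_lt_mesIdx f hjσ)]
    rcases ih hjσ.le with heq | hlt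
    · obtain ⟨a, ha, hab⟩ := hstep j hjσ heq _ (min'_mem _ _)
      rw [heq]
      rcases ((min'_le _ _ ha).trans hab).lt_or_eq with hlt | heq'
      · exact Or.inr fun x y => by
          simpa using List.append_left_lt (List.cons_lt_cons_iff.2 (Or.inl hlt))
      · exact Or.inl (by rw [heq'])
    · exact Or.inr fun x y => by simpa using hlt _ _

lemma mes_le_mes_of_subset (h : ρ ⊆ σ) (hidx : mesIdx f ρ = mesIdx f σ) : mes f σ ≤ mes f ρ :=
  mes_le_mes_of_mesCandidates f hidx.symm fun _ _ _ b hb => ⟨b, mesCandidates_mono f h _ hb, le_rfl⟩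

lemma mes_le_mes_of_mesSet_subset (h : mesSet f σ ⊆ ρ) (hidx : mesIdx f ρ = mesIdx f σ) :
    mes f ρ ≤ mes f σ :=
  mes_le_mes_of_mesCandidates f hidx fun _ hj _ _ hb =>
    ⟨_, mem_mesCandidates_of_mem f (min'_mem _ _) (h (min'_mesCandidates_mem_mesSet f hj)),
      min'_le _ _ hb⟩

lemma mes_eq_of_mesSet_subset_of_subset (hσ : ∃ j, σ ⊆ f j) (hM : mesSet f σ ⊆ ρ)
    (hρσ : ρ ⊆ σ) : mes f ρ = mes f σ := by
  have hidx : mesIdx f ρ = mesIdx f σ :=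
    le_antisymm (mesIdx_mono f hσ hρσ)
      (mesIdx_le_mesIdx_of_mesSet_subset f ⟨_, hρσ.trans (subset_mesIdx f hσ)⟩ hM)
  exact le_antisymm (mes_le_mes_of_mesSet_subset f hM hidx) (mes_le_mes_of_subset f hρσ hidx)

lemma mes_union {σ₁ σ₂ : Finset α} (h₁ : ∃ j, σ₁ ⊆ f j) (h₂ : ∃ j, σ₂ ⊆ f j)
    (he : mes f σ₁ = mes f σ₂) : mes f (σ₁ ∪ σ₂) = mes f σ₁ := by
  have h₁₂ : mesIdx f σ₁ = mesIdx f σ₂ := by rw [← length_mes, he, length_mes]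
  have hsub : σ₁ ∪ σ₂ ⊆ f (mesIdx f σ₁) :=
    union_subset (subset_mesIdx f h₁) (h₁₂ ▸ subset_mesIdx f h₂)
  have hidx : mesIdx f (σ₁ ∪ σ₂) = mesIdx f σ₁ :=
    le_antisymm (mesIdx_le f hsub) (mesIdx_mono f ⟨_, hsub⟩ subset_union_left)
  have hpre : ∀ j ≤ mesIdx f σ₁, mesAux σ₂ f j = mesAux σ₁ f j := fun j hj => by
    rw [mesAux_eq_take f (h₁₂ ▸ hj), mesAux_eq_take f hj, he]
  refine le_antisymm (mes_le_mes_of_subset f subset_union_left hidx.symm)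
    (mes_le_mes_of_mesCandidates f hidx.symm fun j hj heq b hb => ?_)
  rw [hidx] at hj
  rw [← heq, mesCandidates_union] at hb
  rw [← heq]
  rcases mem_union.1 hb with hb | hb
  · exact ⟨b, hb, le_rfl⟩
  · -- `σ₁` and `σ₂` append the same entry at step `j`
    have hentry := hpre (j + 1) hj
    rw [mesAux_succ f (not_subset_of_lt_mesIdx f (h₁₂ ▸ hj)),
      mesAux_succ f (not_subset_of_lt_mesIdx f hj), hpre j hj.le] at hentry
    refine ⟨_, min'_mem _ (mesCandidates_nonempty f (not_subset_of_lt_mesIdx f hj) _), ?_⟩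
    rw [← List.singleton_inj.1 (List.append_cancel_left hentry)]
    exact min'_le _ _ hb

/-- A face containing `mesSet f σ` has a key at least that of `σ`, with equality only if it has the
same `mes`; this is why the classes of faces with equal `mes` are collapsed in decreasing key order. -/
noncomputable def mesKey (σ : Finset α) : ℕ ×ₗ (List α)ᵒᵈ :=
  toLex (mesIdx f σ, OrderDual.toDual (mes f σ))

lemma mes_eq_of_mesSet_subset_of_mesKey_le (hρ : ∃ j, ρ ⊆ f j) (h : mesSet f σ ⊆ ρ)
    (hkey : mesKey f ρ ≤ mesKey f σ) : mes f ρ = mes f σ := by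
  obtain ⟨hidx_le, hmes_le⟩ := Prod.Lex.toLex_le_toLex'.1 hkey
  have hidx := le_antisymm hidx_le (mesIdx_le_mesIdx_of_mesSet_subset f hρ h)
  exact le_antisymm (mes_le_mes_of_mesSet_subset f h hidx) (hmes_le hidx)

end MinimalExclusionSequence

section Collapse

variable {α : Type*} [LinearOrder α] {K : Finset (Finset α)} {facets : ℕ → Finset α} {m : ℕ}

lemma facets_mesIdx_mem (hfac : ∀ j < m, facets j ∈ K)
    (hcov : ∀ σ ∈ K, ∃ j < m, σ ⊆ facets j) {σ : Finset α} (hσ : σ ∈ K) :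
    facets (mesIdx facets σ) ∈ K := by
  obtain ⟨j, hjm, hj⟩ := hcov σ hσ
  exact hfac _ ((mesIdx_le facets hj).trans_lt hjm)

lemma union_mem_of_mes_eq (hK : IsComplex K) (hfac : ∀ j < m, facets j ∈ K)
    (hcov : ∀ σ ∈ K, ∃ j < m, σ ⊆ facets j) {x y : Finset α} (hx : x ∈ K) (hy : y ∈ K)
    (hxy : mes facets x = mes facets y) :
    x ∪ y ∈ K ∧ mes facets (x ∪ y) = mes facets x := by
  obtain ⟨hx', hy'⟩ : (∃ j, x ⊆ facets j) ∧ ∃ j, y ⊆ facets j :=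
    ⟨(hcov x hx).imp fun _ h => h.2, (hcov y hy).imp fun _ h => h.2⟩
  have hidx : mesIdx facets y = mesIdx facets x := by rw [← length_mes, ← hxy, length_mes]
  have hsub : x ∪ y ⊆ facets (mesIdx facets x) :=
    union_subset (subset_mesIdx facets hx') (hidx ▸ subset_mesIdx facets hy')
  exact ⟨hK _ (facets_mesIdx_mem hfac hcov hx) _ hsub, mes_union facets hx' hy' hxy⟩

lemma exists_greatest_of_mes_eq (hK : IsComplex K) (hfac : ∀ j < m, facets j ∈ K)
    (hcov : ∀ σ ∈ K, ∃ j < m, σ ⊆ facets j) {σ : Finset α} (hσ : σ ∈ K) :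
    ∃ τ ∈ K, mes facets τ = mes facets σ ∧
      ∀ ρ ∈ K, mes facets ρ = mes facets σ → ρ ⊆ τ := by
  have hclass : (K.filter (mes facets · = mes facets σ)).Nonempty := ⟨σ, mem_filter.2 ⟨hσ, rfl⟩⟩
  obtain ⟨hτK, hτ⟩ : _ ∈ K ∧ mes facets _ = mes facets σ :=
    sup'_induction hclass id (p := fun τ => τ ∈ K ∧ mes facets τ = mes facets σ)
      (fun x ⟨hxK, hx⟩ y ⟨hyK, hy⟩ =>
        (union_mem_of_mes_eq hK hfac hcov hxK hyK (hx.trans hy.symm)).imp_right (·.trans hx))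
      fun ρ hρ => mem_filter.1 hρ
  exact ⟨_, hτK, hτ, fun ρ hρ hρσ => le_sup' id (mem_filter.2 ⟨hρ, hρσ⟩)⟩

lemma elemCollapse_filter_mes_mem_erase (hK : IsComplex K) (hfac : ∀ j < m, facets j ∈ K)
    (hcov : ∀ σ ∈ K, ∃ j < m, σ ⊆ facets j) {S : Finset (List α)} {σ : Finset α}
    (hσ : σ ∈ K.filter (mes facets · ∈ S))
    (hmax : ∀ ρ ∈ K.filter (mes facets · ∈ S), mesKey facets ρ ≤ mesKey facets σ) :
    ElemCollapse (K.sup fun σ => (mesSet facets σ).card) (K.filter (mes facets · ∈ S))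
      (K.filter (mes facets · ∈ S.erase (mes facets σ))) := by
  obtain ⟨hσK, hσS⟩ := mem_filter.1 hσ
  have hex : ∀ ρ ∈ K, ∃ j, ρ ⊆ facets j := fun ρ hρ => (hcov ρ hρ).imp fun _ h => h.2
  have hMK : mesSet facets σ ∈ K := hK σ hσK _ (mesSet_subset facets σ)
  have hM : mes facets (mesSet facets σ) = mes facets σ :=
    mes_eq_of_mesSet_subset_of_subset facets (hex σ hσK) Subset.rfl (mesSet_subset facets σ)
  have hiff : ∀ ρ ∈ K.filter (mes facets · ∈ S),
      mesSet facets σ ⊆ ρ ↔ mes facets ρ = mes facets σ := fun ρ hρ =>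
    ⟨fun h => mes_eq_of_mesSet_subset_of_mesKey_le facets (hex ρ (mem_filter.1 hρ).1) h
      (hmax ρ hρ), fun h => by rw [mesSet, ← h]; exact mesSet_subset facets ρ⟩
  obtain ⟨τ, hτK, hτ, hτ_max⟩ := exists_greatest_of_mes_eq hK hfac hcov hσK
  refine ⟨mesSet facets σ, ⟨mem_filter.2 ⟨hMK, hM ▸ hσS⟩, τ, mem_filter.2 ⟨hτK, hτ ▸ hσS⟩,
      (mesSet_subset facets σ).trans (hτ_max σ hσK rfl),
      fun ρ hρ hMρ => hτ_max ρ (mem_filter.1 hρ).1 ((hiff ρ hρ).1 hMρ)⟩,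
    le_sup (f := fun σ => (mesSet facets σ).card) hσK, ?_⟩
  ext ρ
  simp only [mem_filter, mem_erase]
  constructor
  · rintro ⟨hρK, hne, hρS⟩
    exact ⟨⟨hρK, hρS⟩, fun h => hne ((hiff ρ (mem_filter.2 ⟨hρK, hρS⟩)).1 h)⟩
  · rintro ⟨⟨hρK, hρS⟩, hM⟩
    exact ⟨hρK, fun h => hM ((hiff ρ (mem_filter.2 ⟨hρK, hρS⟩)).2 h), hρS⟩

lemma collapsible_filter_mes_mem (hK : IsComplex K) (hfac : ∀ j < m, facets j ∈ K)
    (hcov : ∀ σ ∈ K, ∃ j < m, σ ⊆ facets j) (S : Finset (List α)) :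
    Collapsible (K.sup fun σ => (mesSet facets σ).card) (K.filter (mes facets · ∈ S)) := by
  induction S using Finset.strongInduction with
  | H S ih =>
    rcases (K.filter (mes facets · ∈ S)).eq_empty_or_nonempty with hempty | hne
    · rw [hempty]
      exact .refl
    obtain ⟨σ, hσ, hmax⟩ := exists_max_image _ (mesKey facets) hne
    exact .head (elemCollapse_filter_mes_mem_erase hK hfac hcov hσ hmax)
      (ih _ (erase_ssubset (mem_filter.1 hσ).2))

end Collapse

theorem collapsible_of_mes_general (K : Finset (Finset V)) (hK : IsComplex K)
    (m : ℕ) (facets : ℕ → Finset V)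
    (henum : ∀ s : Finset V, IsMaxFace K s ↔ ∃ j < m, facets j = s) :
    Collapsible (K.sup fun σ => (mesSet facets σ).card) K := by
  have hfac : ∀ j < m, facets j ∈ K := fun j hj => ((henum _).2 ⟨j, hj, rfl⟩).1
  have hcov : ∀ σ ∈ K, ∃ j < m, σ ⊆ facets j := by
    intro σ hσ
    obtain ⟨s, hσs, hs⟩ := K.exists_le_maximal hσ
    obtain ⟨j, hj, rfl⟩ := (henum s).1 ⟨hs.prop, fun t ht hst => (hs.eq_of_le ht hst).symm⟩
    exact ⟨j, hj, hσs⟩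
  have hall := collapsible_filter_mes_mem hK hfac hcov (K.image (mes facets))
  rwa [filter_true_of_mem fun σ hσ => mem_image_of_mem _ hσ] at hall

/-- Every simplicial complex `K` is `d(K)`-collapsible, where
`d(K) = max_{σ ∈ K} |M(σ)|` and `M(σ)` is the set of vertices of the minimal exclusion
sequence of `σ` (with respect to the given vertex order and facet order). -/
theorem collapsible_of_mes (K : Finset (Finset V)) (hK : IsComplex K)
    (m : ℕ) (facets : ℕ → Finset V)
    (henum : ∀ s : Finset V, IsMaxFace K s ↔ ∃ j < m, facets j = s)
    (hinj : ∀ j < m, ∀ k < m, facets j = facets k → j = k) :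
    Collapsible (K.sup fun σ => (mesSet facets σ).card) K :=
  collapsible_of_mes_general K hK m facets henum
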